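/- arXiv:math/0211286 — 2 statements merged into one kernel-verified Lean document; each statement's English description precedes it below -/
import Mathlib

section
/- In R^4, let C be the cube [0,2]^4 and let Q be the rectangular parallelepiped [0,1] × [0,1] × [0,3] × [0,3]. Then no 3-dimensional face of C can be translated to a proper subset of the parallel 3-dimensional face of Q, and no 3-dimensional face of Q can be translated to a proper subset of the parallel 3-dimensional face of C, yet C and Q are not translates of each other. -/
open MeasureTheory

noncomputable section

/-- A convex polytope in `ℝ^d`: the convex hull of a finite set of points,
with nonempty interior. -/
def IsConvexPolytope {d : ℕ} (P : Set (EuclideanSpace ℝ (Fin d))) : Prop :=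
  (∃ S : Finset (EuclideanSpace ℝ (Fin d)), P = convexHull ℝ (S : Set (EuclideanSpace ℝ (Fin d)))) ∧
  (interior P).Nonempty

/-- The face of `P` with outward normal vector `n`: the set of maximizers of `⟪·, n⟫` on `P`. -/
def face {d : ℕ} (P : Set (EuclideanSpace ℝ (Fin d))) (n : EuclideanSpace ℝ (Fin d)) :
    Set (EuclideanSpace ℝ (Fin d)) :=
  {x | x ∈ P ∧ ∀ y ∈ P, inner (𝕜 := ℝ) y n ≤ inner (𝕜 := ℝ) x n}

/-- The dimension of a face: the dimension of its affine hull. -/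
def faceDim {d : ℕ} (F : Set (EuclideanSpace ℝ (Fin d))) : ℕ :=
  Module.finrank ℝ (affineSpan ℝ F).direction

/-- `A` can be put inside `B` by a translation: some translate of `A` is a subset of `B`
not coinciding with `B`. -/
def CanPutInside {d : ℕ} (A B : Set (EuclideanSpace ℝ (Fin d))) : Prop :=
  ∃ v : EuclideanSpace ℝ (Fin d), (fun x => v + x) '' A ⊂ B

/-- `Q` is a translate of `P`. -/
def IsTranslate {d : ℕ} (P Q : Set (EuclideanSpace ℝ (Fin d))) : Prop :=
  ∃ v : EuclideanSpace ℝ (Fin d), Q = (fun x => v + x) '' P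

local notation "E4" => EuclideanSpace ℝ (Fin 4)

lemma box_face_mem_iff (a : Fin 4 → ℝ) (ha : ∀ i, 0 ≤ a i) (n : E4) (x : E4) :
    x ∈ face {y : E4 | ∀ i, y i ∈ Set.Icc (0:ℝ) (a i)} n ↔
      ((∀ i, x i ∈ Set.Icc (0:ℝ) (a i)) ∧
       (∀ i, (0 < n i → x i = a i) ∧ (n i < 0 → x i = 0))) := by
  constructor
  · rintro ⟨hxP, hmax⟩
    refine ⟨hxP, ?_⟩
    set y : E4 := WithLp.toLp 2 (fun i => if 0 < n i then a i else 0 : Fin 4 → ℝ) with hy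
    have hyP : ∀ i, y i ∈ Set.Icc (0:ℝ) (a i) := by
      intro i
      by_cases h : 0 < n i <;> simp [hy, h, ha i]
    have hle := hmax y hyP
    rw [PiLp.inner_apply, PiLp.inner_apply] at hle
    simp only [RCLike.inner_apply, conj_trivial] at hle
    replace hle : ∑ i, y i * n i ≤ ∑ i, x i * n i := by simpa only [mul_comm] using hle
    have hterm : ∀ i ∈ Finset.univ, x i * n i ≤ y i * n i := by
      intro i _
      by_cases h : 0 < n i
      · have : y i = a i := by simp [hy, h]
        rw [this]
        exact mul_le_mul_of_nonneg_right (hxP i).2 h.le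
      · have : y i = 0 := by simp [hy, h]
        rw [this, zero_mul]
        push_neg at h
        exact mul_nonpos_of_nonneg_of_nonpos (hxP i).1 h
    have hsum := le_antisymm (Finset.sum_le_sum hterm) hle
    have heq := (Finset.sum_eq_sum_iff_of_le hterm).mp hsum
    intro i
    have hi := heq i (Finset.mem_univ i)
    constructor
    · intro hpos
      have : y i = a i := by simp [hy, hpos]
      rw [this] at hi
      exact mul_right_cancel₀ (ne_of_gt hpos) hi
    · intro hneg
      have : y i = 0 := by simp [hy, asymm hneg]
      rw [this, zero_mul] at hi
      exact (mul_eq_zero.mp hi).resolve_right (ne_of_lt hneg)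
  · rintro ⟨hbox, hsgn⟩
    refine ⟨hbox, ?_⟩
    intro z hz
    rw [PiLp.inner_apply, PiLp.inner_apply]
    simp only [RCLike.inner_apply, conj_trivial]
    apply Finset.sum_le_sum
    intro i _
    rcases lt_trichotomy (n i) 0 with h | h | h
    · rw [(hsgn i).2 h, mul_zero, mul_comm]
      exact mul_nonpos_of_nonneg_of_nonpos (hz i).1 h.le
    · simp [h]
    · rw [(hsgn i).1 h]
      exact mul_le_mul_of_nonneg_left (hz i).2 h.le

lemma mem_face_box (a : Fin 4 → ℝ) (ha : ∀ i, 0 ≤ a i) (n : E4) (j : Fin 4)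
    (h0 : ∀ i, i ≠ j → n i = 0)
    (x : E4) (hx : x j = if 0 < n j then a j else 0)
    (hbox : ∀ k, k ≠ j → x k ∈ Set.Icc (0:ℝ) (a k)) :
    x ∈ face {y : E4 | ∀ i, y i ∈ Set.Icc (0:ℝ) (a i)} n := by
  rw [box_face_mem_iff a ha]
  have hbox' : ∀ i, x i ∈ Set.Icc (0:ℝ) (a i) := by
    intro i
    by_cases h : i = j
    · subst h
      rw [hx]
      split_ifs
      · exact ⟨ha i, le_rfl⟩
      · exact ⟨le_rfl, ha i⟩
    · exact hbox i h
  refine ⟨hbox', fun i => ⟨?_, ?_⟩⟩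
  · intro hpos
    have hij : i = j := by
      by_contra h
      rw [h0 i h] at hpos
      exact lt_irrefl 0 hpos
    subst hij
    rw [hx, if_pos hpos]
  · intro hneg
    have hij : i = j := by
      by_contra h
      rw [h0 i h] at hneg
      exact lt_irrefl 0 hneg
    subst hij
    rw [hx, if_neg (asymm hneg)]

lemma faceDim_le_two_of_fixed (F : Set E4) (i1 i2 : Fin 4) (h12 : i1 ≠ i2) (c1 c2 : ℝ)
    (h : ∀ x ∈ F, x i1 = c1 ∧ x i2 = c2) : faceDim F ≤ 2 := by
  classical
  let f : E4 →ₗ[ℝ] ℝ × ℝ :=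
    { toFun := fun v => (v i1, v i2)
      map_add' := fun u w => by simp [Prod.ext_iff]
      map_smul' := fun c u => by simp [Prod.ext_iff] }
  have hker : vectorSpan ℝ F ≤ LinearMap.ker f := by
    rw [vectorSpan_def, Submodule.span_le]
    rintro w hw
    rw [Set.mem_vsub] at hw
    obtain ⟨x, hx, y, hy, rfl⟩ := hw
    have hx' := h x hx
    have hy' := h y hy
    refine LinearMap.mem_ker.mpr ?_
    have hfv : f (x -ᵥ y) = (x i1 - y i1, x i2 - y i2) := by
      show ((x - y) i1, (x - y) i2) = _
      simp [PiLp.sub_apply]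
    rw [hfv, hx'.1, hy'.1, hx'.2, hy'.2]
    simp
  have hsurj : LinearMap.range f = ⊤ := by
    rw [LinearMap.range_eq_top]
    rintro ⟨s, t⟩
    refine ⟨EuclideanSpace.single i1 s + EuclideanSpace.single i2 t, ?_⟩
    show ((EuclideanSpace.single i1 s + EuclideanSpace.single i2 t : E4) i1,
          (EuclideanSpace.single i1 s + EuclideanSpace.single i2 t : E4) i2) = (s, t)
    simp [EuclideanSpace.single_apply, h12, h12.symm]
  have hrank := f.finrank_range_add_finrank_ker
  rw [hsurj, finrank_top] at hrank
  have h2' : Module.finrank ℝ (ℝ × ℝ) = 2 := by simp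
  have h4 : Module.finrank ℝ E4 = 4 := finrank_euclideanSpace_fin
  have hker2 : Module.finrank ℝ (LinearMap.ker f) = 2 := by omega
  calc faceDim F = Module.finrank ℝ (vectorSpan ℝ F) := by
        rw [faceDim, direction_affineSpan]
    _ ≤ Module.finrank ℝ (LinearMap.ker f) := Submodule.finrank_mono hker
    _ = 2 := hker2

lemma faceDim_le_two (a : Fin 4 → ℝ) (ha : ∀ i, 0 ≤ a i) (n : E4) (i1 i2 : Fin 4)
    (h12 : i1 ≠ i2) (h1 : n i1 ≠ 0) (h2 : n i2 ≠ 0) :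
    faceDim (face {y : E4 | ∀ i, y i ∈ Set.Icc (0:ℝ) (a i)} n) ≤ 2 := by
  apply faceDim_le_two_of_fixed _ i1 i2 h12 (if 0 < n i1 then a i1 else 0)
    (if 0 < n i2 then a i2 else 0)
  intro x hx
  rw [box_face_mem_iff a ha] at hx
  constructor
  · rcases h1.lt_or_gt with h | h
    · rw [(hx.2 i1).2 h, if_neg (asymm h)]
    · rw [(hx.2 i1).1 h, if_pos h]
  · rcases h2.lt_or_gt with h | h
    · rw [(hx.2 i2).2 h, if_neg (asymm h)]
    · rw [(hx.2 i2).1 h, if_pos h]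

lemma not_canput (a b : Fin 4 → ℝ) (ha : ∀ i, 0 ≤ a i) (j i : Fin 4) (hij : i ≠ j)
    (hba : b i < a i) (ca : ℝ) (A B : Set E4)
    (hA : ∀ x : E4, x j = ca → (∀ k, k ≠ j → x k ∈ Set.Icc (0:ℝ) (a k)) → x ∈ A)
    (hB : ∀ x ∈ B, ∀ k, x k ∈ Set.Icc (0:ℝ) (b k)) :
    ¬ CanPutInside A B := by
  rintro ⟨v, hss⟩
  have hsub := hss.subset
  set p0 : E4 := EuclideanSpace.single j ca with hp0
  set p1 : E4 := p0 + EuclideanSpace.single i (a i) with hp1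
  have hp0A : p0 ∈ A := by
    refine hA p0 (by simp [hp0, EuclideanSpace.single_apply]) ?_
    intro k hk
    simp [hp0, EuclideanSpace.single_apply, hk]
    exact ha k
  have hp1A : p1 ∈ A := by
    refine hA p1 ?_ ?_
    · simp [hp1, hp0, EuclideanSpace.single_apply, hij.symm]
    · intro k hk
      by_cases hki : k = i
      · subst hki
        simp [hp1, hp0, EuclideanSpace.single_apply, hk]
        exact ha k
      · simp [hp1, hp0, EuclideanSpace.single_apply, hk, hki]
        exact ha k
  have h0 := hB _ (hsub (Set.mem_image_of_mem _ hp0A)) i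
  have h1 := hB _ (hsub (Set.mem_image_of_mem _ hp1A)) i
  rw [PiLp.add_apply] at h0 h1
  have e0 : p0 i = 0 := by simp [hp0, EuclideanSpace.single_apply, hij]
  have e1 : p1 i = a i := by simp [hp1, hp0, EuclideanSpace.single_apply, hij]
  rw [e0] at h0
  rw [e1] at h1
  have := h0.1
  have := h1.2
  linarith


/-- **Alexandrov's 4-dimensional counterexample.** For the cube `C = [0,2]^4` and the box
`Q = [0,1] × [0,1] × [0,3] × [0,3]`, no 3-dimensional face of either polytope can be
translated into a proper subset of the parallel face of the other, yet `C` and `Q`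
are not translates of each other. -/
theorem alexandrov_counterexample_dim4 :
    let C : Set (EuclideanSpace ℝ (Fin 4)) := {x | ∀ i, x i ∈ Set.Icc (0 : ℝ) 2}
    let q : Fin 4 → ℝ := ![1, 1, 3, 3]
    let Q : Set (EuclideanSpace ℝ (Fin 4)) := {x | ∀ i, x i ∈ Set.Icc (0 : ℝ) (q i)}
    (∀ n : EuclideanSpace ℝ (Fin 4), ‖n‖ = 1 →
      (faceDim (face C n) = 3 ∨ faceDim (face Q n) = 3) →
      ¬ CanPutInside (face C n) (face Q n) ∧ ¬ CanPutInside (face Q n) (face C n)) ∧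
    ¬ IsTranslate C Q := by
  intro C q Q
  have hC : C = {x : E4 | ∀ i, x i ∈ Set.Icc (0 : ℝ) 2} := rfl
  have hq : q = ![1, 1, 3, 3] := rfl
  have hQ : Q = {x : E4 | ∀ i, x i ∈ Set.Icc (0 : ℝ) (q i)} := rfl
  have hqnn : ∀ i, 0 ≤ q i := by
    intro i
    fin_cases i <;> norm_num [hq]
  constructor
  · intro n hn hdim
    have key : ∀ i1 i2 : Fin 4, i1 ≠ i2 → n i1 ≠ 0 → n i2 = 0 := by
      intro i1 i2 h12 h1
      by_contra h2
      have hC2 : faceDim (face C n) ≤ 2 := by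
        rw [hC]
        exact faceDim_le_two (fun _ => 2) (fun _ => by norm_num) n i1 i2 h12 h1 h2
      have hQ2 : faceDim (face Q n) ≤ 2 := by
        rw [hQ]
        exact faceDim_le_two q hqnn n i1 i2 h12 h1 h2
      rcases hdim with h | h <;> omega
    have hn0 : n ≠ 0 := by
      intro h
      rw [h, norm_zero] at hn
      norm_num at hn
    obtain ⟨j, hj⟩ : ∃ j, n j ≠ 0 := by
      by_contra h
      push_neg at h
      exact hn0 (by ext i; simpa using h i)
    have h0 : ∀ i, i ≠ j → n i = 0 := fun i hij => key j i (Ne.symm hij) hj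
    constructor
    · -- ¬ CanPutInside (face C n) (face Q n)
      set i : Fin 4 := if j = 0 then 1 else 0 with hi
      have hij : i ≠ j := by
        rw [hi]
        split_ifs with h
        · rw [h]; decide
        · exact fun e => h e.symm
      have hqi : q i < 2 := by
        rw [hi, hq]
        split_ifs <;> norm_num
      refine not_canput (fun _ => 2) q (fun _ => by norm_num) j i hij hqi
        (if 0 < n j then 2 else 0) (face C n) (face Q n) ?_ ?_
      · intro x hx1 hx2
        rw [hC]
        exact mem_face_box (fun _ => 2) (fun _ => by norm_num) n j h0 x hx1 hx2
      · exact fun x hx k => hx.1 k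
    · -- ¬ CanPutInside (face Q n) (face C n)
      set i : Fin 4 := if j = 2 then 3 else 2 with hi
      have hij : i ≠ j := by
        rw [hi]
        split_ifs with h
        · rw [h]; decide
        · exact fun e => h e.symm
      have hqi : (2:ℝ) < q i := by
        rw [hi, hq]
        split_ifs <;> exact (show (2:ℝ) < 3 by norm_num)
      refine not_canput q (fun _ => 2) hqnn j i hij hqi
        (if 0 < n j then q j else 0) (face Q n) (face C n) ?_ ?_
      · intro x hx1 hx2
        rw [hQ]
        exact mem_face_box q hqnn n j h0 x hx1 hx2
      · exact fun x hx k => hx.1 k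
  · rintro ⟨v, hQC⟩
    have h0C : (0 : E4) ∈ C := by
      intro i
      simp
    have hpC : (EuclideanSpace.single 0 (2:ℝ) : E4) ∈ C := by
      intro i
      rw [EuclideanSpace.single_apply]
      split_ifs <;> norm_num
    have hv : v ∈ Q := by
      rw [hQC]
      exact ⟨0, h0C, by simp⟩
    have hv2 : v + EuclideanSpace.single 0 (2:ℝ) ∈ Q := by
      rw [hQC]
      exact ⟨_, hpC, rfl⟩
    have a1 : (0:ℝ) ≤ v 0 := (hv 0).1
    have a2 : (v + EuclideanSpace.single 0 (2:ℝ) : E4) 0 ≤ q 0 := (hv2 0).2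
    rw [PiLp.add_apply, EuclideanSpace.single_apply, if_pos rfl] at a2
    have hq0 : q 0 = 1 := by rw [hq]; norm_num
    rw [hq0] at a2
    linarith
end
end

section
/- Let P_1, P_2 be convex polytopes in R^2 such that for every unit vector n, the face of P_1 with outward normal n has the same 1-dimensional volume (length) as the face of P_2 with outward normal n. Then P_2 is a translate of P_1. -/
open MeasureTheory

noncomputable section

open MeasureTheory Real Filter Set Topology

local notation "E2" => EuclideanSpace ℝ (Fin 2)
local notation "⟪" x ", " y "⟫" => inner (𝕜 := ℝ) x y

def nv (θ : ℝ) : E2 := (WithLp.equiv 2 (Fin 2 → ℝ)).symm ![Real.cos θ, Real.sin θ]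
def tv (θ : ℝ) : E2 := (WithLp.equiv 2 (Fin 2 → ℝ)).symm ![-Real.sin θ, Real.cos θ]

lemma inner_nv (x : E2) (θ : ℝ) : ⟪x, nv θ⟫ = x 0 * Real.cos θ + x 1 * Real.sin θ := by
  simp [nv, PiLp.inner_apply, Fin.sum_univ_two, RCLike.inner_apply]
  ring

lemma inner_tv (x : E2) (θ : ℝ) : ⟪x, tv θ⟫ = x 0 * (-Real.sin θ) + x 1 * Real.cos θ := by
  simp [tv, PiLp.inner_apply, Fin.sum_univ_two, RCLike.inner_apply]
  ring

lemma norm_nv (θ : ℝ) : ‖nv θ‖ = 1 := by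
  rw [EuclideanSpace.norm_eq]
  have := Real.cos_sq_add_sin_sq θ
  simp [nv, Fin.sum_univ_two]

lemma eq_of_inner_nv_tv {x y : E2} (θ : ℝ) (h1 : ⟪x, nv θ⟫ = ⟪y, nv θ⟫)
    (h2 : ⟪x, tv θ⟫ = ⟪y, tv θ⟫) : x = y := by
  rw [inner_nv, inner_nv] at h1
  rw [inner_tv, inner_tv] at h2
  have hcs := Real.cos_sq_add_sin_sq θ
  have e0 : x 0 = y 0 := by linear_combination Real.cos θ * h1 - Real.sin θ * h2 + (y 0 - x 0) * hcs
  have e1 : x 1 = y 1 := by linear_combination Real.sin θ * h1 + Real.cos θ * h2 + (y 1 - x 1) * hcs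
  ext i
  fin_cases i <;> assumption

lemma hasDerivAt_inner_nv (x : E2) (θ : ℝ) :
    HasDerivAt (fun s => ⟪x, nv s⟫) ⟪x, tv θ⟫ θ := by
  have : (fun s => ⟪x, nv s⟫) = fun s => x 0 * Real.cos s + x 1 * Real.sin s :=
    funext (inner_nv x)
  rw [this, inner_tv]
  exact ((Real.hasDerivAt_cos θ).const_mul (x 0)).add ((Real.hasDerivAt_sin θ).const_mul (x 1))

lemma continuous_inner_nv (x : E2) : Continuous fun s => ⟪x, nv s⟫ := by
  have : (fun s => ⟪x, nv s⟫) = fun s => x 0 * Real.cos s + x 1 * Real.sin s :=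
    funext (inner_nv x)
  rw [this]; fun_prop

lemma eventually_pos_left {f : ℝ → ℝ} {c d : ℝ} (h0 : f c = 0) (hd : HasDerivAt f d c)
    (hneg : d < 0) : ∀ᶠ θ in 𝓝[<] c, 0 < f θ := by
  have hs := hasDerivAt_iff_tendsto_slope.1 hd
  have h1 : ∀ᶠ θ in 𝓝[≠] c, slope f c θ < 0 := hs.eventually (eventually_lt_nhds hneg)
  have h2 : ∀ᶠ θ in 𝓝[<] c, slope f c θ < 0 :=
    nhdsWithin_mono c (fun θ (hθ : θ < c) => ne_of_lt hθ) h1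
  filter_upwards [h2, self_mem_nhdsWithin] with θ hslope (hlt : θ < c)
  rw [slope_def_field] at hslope
  have hden : θ - c < 0 := by linarith
  have : 0 < f θ - f c := by
    have := div_neg_iff.1 (by simpa [h0] using hslope)
    rcases this with ⟨hnum, _⟩ | ⟨hnum, hden'⟩
    · linarith
    · linarith
  linarith [h0]

lemma eventually_pos_right {f : ℝ → ℝ} {c d : ℝ} (h0 : f c = 0) (hd : HasDerivAt f d c)
    (hpos : 0 < d) : ∀ᶠ θ in 𝓝[>] c, 0 < f θ := by
  have hs := hasDerivAt_iff_tendsto_slope.1 hd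
  have h1 : ∀ᶠ θ in 𝓝[≠] c, 0 < slope f c θ := hs.eventually (eventually_gt_nhds hpos)
  have h2 : ∀ᶠ θ in 𝓝[>] c, 0 < slope f c θ :=
    nhdsWithin_mono c (fun θ (hθ : c < θ) => (ne_of_lt hθ).symm) h1
  filter_upwards [h2, self_mem_nhdsWithin] with θ hslope (hlt : c < θ)
  rw [slope_def_field] at hslope
  have hden : 0 < θ - c := by linarith
  have : 0 < f θ - f c := by
    have := (div_pos_iff).1 (by simpa [h0] using hslope)
    rcases this with ⟨hnum, _⟩ | ⟨_, hden'⟩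
    · linarith
    · linarith
  linarith [h0]

lemma vec_eq_of_inner_nv_ball {w w' : E2} {c r : ℝ} (hr : 0 < r)
    (h : ∀ θ ∈ Metric.ball c r, ⟪w, nv θ⟫ = ⟪w', nv θ⟫) : w = w' := by
  set δ := min (r / 2) (Real.pi / 2) with hδ
  have hδpos : 0 < δ := lt_min (by linarith) (by positivity)
  have hδr : δ < r := lt_of_le_of_lt (min_le_left _ _) (by linarith)
  have hδπ : δ < Real.pi := lt_of_le_of_lt (min_le_right _ _) (by linarith [Real.pi_pos])
  have hsin : 0 < Real.sin δ := Real.sin_pos_of_pos_of_lt_pi hδpos hδπ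
  have e1 := h c (by simp [Metric.mem_ball, hr])
  have e2 := h (c + δ) (by simp [Metric.mem_ball, abs_of_pos hδpos, hδr])
  rw [inner_nv, inner_nv] at e1 e2
  rw [Real.cos_add, Real.sin_add] at e2
  have hcs := Real.cos_sq_add_sin_sq c
  have h0 : w 0 = w' 0 := by
    have key : (w 0 - w' 0) * Real.sin δ = 0 := by
      linear_combination (Real.sin c * Real.cos δ + Real.cos c * Real.sin δ) * e1 - Real.sin c * e2 + (w' 0 - w 0) * Real.sin δ * hcs
    rcases mul_eq_zero.1 key with hk | hk
    · linarith
    · exact absurd hk (ne_of_gt hsin)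
  have h1 : w 1 = w' 1 := by
    have key : (w 1 - w' 1) * Real.sin δ = 0 := by
      linear_combination (-(Real.cos c * Real.cos δ) + Real.sin c * Real.sin δ) * e1 + Real.cos c * e2 + (w' 1 - w 1) * Real.sin δ * hcs
    rcases mul_eq_zero.1 key with hk | hk
    · linarith
    · exact absurd hk (ne_of_gt hsin)
  ext i; fin_cases i <;> assumption

lemma norm_tv (θ : ℝ) : ‖tv θ‖ = 1 := by
  have h := Real.cos_sq_add_sin_sq θ
  rw [EuclideanSpace.norm_eq]
  simp [tv, Fin.sum_univ_two]

lemma isometry_line (a u : E2) (hu : ‖u‖ = 1) : Isometry (fun t : ℝ => a + t • u) := by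
  apply Isometry.of_dist_eq
  intro s t
  rw [dist_eq_norm, Real.dist_eq]
  have : (a + s • u) - (a + t • u) = (s - t) • u := by
    rw [sub_smul]; abel
  rw [this, norm_smul, hu, mul_one, Real.norm_eq_abs]

lemma hm_singleton (a : E2) : μH[(1:ℝ)] ({a} : Set E2) = 0 := by
  have hiso := isometry_line a (nv 0) (norm_nv 0)
  have him : ({a} : Set E2) = (fun t : ℝ => a + t • nv 0) '' {(0:ℝ)} := by simp
  rw [him, hiso.hausdorffMeasure_image (Or.inl zero_le_one),
    MeasureTheory.hausdorffMeasure_real]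
  simp

lemma hm_segment (a b : E2) : μH[(1:ℝ)] (segment ℝ a b) = ENNReal.ofReal ‖b - a‖ := by
  by_cases hab : b = a
  · subst hab
    rw [segment_same]
    simp [hm_singleton]
  · have hne : b - a ≠ 0 := sub_ne_zero.2 hab
    set L : ℝ := ‖b - a‖ with hL
    have hL0 : 0 < L := norm_pos_iff.2 hne
    set u : E2 := L⁻¹ • (b - a) with hu
    have hunorm : ‖u‖ = 1 := norm_smul_inv_norm (𝕜 := ℝ) hne
    have hLu : L • u = b - a := by
      rw [hu, smul_smul, mul_inv_cancel₀ (ne_of_gt hL0), one_smul]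
    have him : segment ℝ a b = (fun t : ℝ => a + t • u) '' Set.Icc 0 L := by
      rw [segment_eq_image']
      ext x
      constructor
      · rintro ⟨θ, ⟨h0, h1⟩, rfl⟩
        refine ⟨θ * L, ⟨by positivity, by nlinarith⟩, ?_⟩
        have : (θ * L) • u = θ • (b - a) := by rw [mul_smul, hLu]
        simp only [this]
      · rintro ⟨t, ⟨h0, h1⟩, rfl⟩
        refine ⟨t / L, ⟨by positivity, by rw [div_le_one hL0]; exact h1⟩, ?_⟩
        show a + (t / L) • (b - a) = a + t • u
        have : (t / L) • (b - a) = t • u := by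
          rw [hu, smul_smul, div_eq_mul_inv]
        rw [this]
    rw [him, (isometry_line a u hunorm).hausdorffMeasure_image (Or.inl zero_le_one),
      MeasureTheory.hausdorffMeasure_real, Real.volume_Icc]
    simp

lemma inner_linear (n : E2) : IsLinearMap ℝ (fun x : E2 => ⟪x, n⟫) :=
  ⟨fun a b => inner_add_left a b n, fun c a => real_inner_smul_left a n c⟩

lemma sup'_support (S : Finset E2) (hS : S.Nonempty) (n : E2) {x : E2}
    (hx : x ∈ convexHull ℝ (S : Set E2)) : ⟪x, n⟫ ≤ S.sup' hS (fun y => ⟪y, n⟫) := by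
  set m := S.sup' hS (fun y => ⟪y, n⟫) with hm
  have hsub : (S : Set E2) ⊆ {z | ⟪z, n⟫ ≤ m} := fun y hy =>
    Finset.le_sup' (fun z => ⟪z, n⟫) (by exact_mod_cast hy)
  exact convexHull_min hsub (convex_halfSpace_le (inner_linear n) m) hx

open scoped Classical in
lemma face_convexHull_eq (S : Finset E2) (hS : S.Nonempty) (n : E2) :
    face (convexHull ℝ (S : Set E2)) n
      = convexHull ℝ ((S.filter fun x => ∀ y ∈ S, ⟪y, n⟫ ≤ ⟪x, n⟫ : Finset E2) : Set E2) := by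
  classical
  set m := S.sup' hS (fun y => ⟪y, n⟫) with hm
  set M := S.filter (fun x => ∀ y ∈ S, ⟪y, n⟫ ≤ ⟪x, n⟫) with hMdef
  obtain ⟨x₀, hx₀S, hx₀max⟩ := S.exists_max_image (fun y => ⟪y, n⟫) hS
  have hx₀M : x₀ ∈ M := Finset.mem_filter.2 ⟨hx₀S, hx₀max⟩
  have hmx₀ : m = ⟪x₀, n⟫ :=
    le_antisymm (Finset.sup'_le _ _ hx₀max) (Finset.le_sup' (fun z => ⟪z, n⟫) hx₀S)
  have hMchar : ∀ x ∈ M, ⟪x, n⟫ = m := fun x hx =>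
    le_antisymm (Finset.le_sup' (fun z => ⟪z, n⟫) (Finset.mem_filter.1 hx).1)
      (hmx₀ ▸ (Finset.mem_filter.1 hx).2 x₀ hx₀S)
  ext x
  constructor
  · rintro ⟨hxP, hxmax⟩
    have hxm : ⟪x, n⟫ = m :=
      le_antisymm (sup'_support S hS n hxP)
        (hmx₀ ▸ hxmax x₀ (subset_convexHull ℝ _ hx₀S))
    rw [Finset.convexHull_eq] at hxP
    obtain ⟨w, hw0, hw1, hwx⟩ := hxP
    have hxsum : x = ∑ y ∈ S, w y • y := by
      rw [← hwx, Finset.centerMass_eq_of_sum_1 _ _ hw1]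
      rfl
    have hinner : ⟪x, n⟫ = ∑ y ∈ S, w y * ⟪y, n⟫ := by
      rw [hxsum, sum_inner]
      exact Finset.sum_congr rfl fun y _ => real_inner_smul_left y n (w y)
    have hsum : ∑ y ∈ S, w y * (m - ⟪y, n⟫) = 0 := by
      have : ∑ y ∈ S, w y * (m - ⟪y, n⟫)
          = m * (∑ y ∈ S, w y) - ∑ y ∈ S, w y * ⟪y, n⟫ := by
        rw [Finset.mul_sum, ← Finset.sum_sub_distrib]
        exact Finset.sum_congr rfl fun y _ => by ring
      rw [this, hw1, ← hinner, hxm]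
      ring
    have hzero : ∀ y ∈ S, w y * (m - ⟪y, n⟫) = 0 :=
      (Finset.sum_eq_zero_iff_of_nonneg fun y hy =>
        mul_nonneg (hw0 y hy) (sub_nonneg.2 (Finset.le_sup' (fun z => ⟪z, n⟫) hy))).1 hsum
    have hwzero : ∀ y ∈ S, y ∉ M → w y = 0 := by
      intro y hyS hyM
      by_contra hwy
      have : m - ⟪y, n⟫ = 0 := by
        rcases mul_eq_zero.1 (hzero y hyS) with h | h
        · exact absurd h hwy
        · exact h
      have hym : ⟪y, n⟫ = m := by linarith
      exact hyM (Finset.mem_filter.2 ⟨hyS, fun z hz => hym ▸ Finset.le_sup' (fun z => ⟪z, n⟫) hz⟩)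
    rw [Finset.convexHull_eq]
    refine ⟨w, fun y hy => hw0 y (Finset.filter_subset _ _ hy), ?_, ?_⟩
    · rw [← hw1]
      exact (Finset.sum_subset (Finset.filter_subset _ _) (fun y hyS hyM => hwzero y hyS hyM)).symm ▸ rfl
    · rw [← hwx]
      exact Finset.centerMass_subset id (Finset.filter_subset _ _) hwzero
  · intro hx
    have hxS : x ∈ convexHull ℝ (S : Set E2) :=
      convexHull_mono (Finset.coe_subset.2 (Finset.filter_subset _ _)) hx
    have hxm : m ≤ ⟪x, n⟫ := by
      have hsub : (M : Set E2) ⊆ {z | m ≤ ⟪z, n⟫} := fun y hy =>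
        (hMchar y (by exact_mod_cast hy)).ge
      exact convexHull_min hsub (convex_halfSpace_ge (inner_linear n) m) hx
    exact ⟨hxS, fun y hy => le_trans (sup'_support S hS n hy) hxm⟩

open scoped Classical in
lemma exists_local (S : Finset E2) (hS : S.Nonempty) (c : ℝ) :
    ∃ a ∈ S, ∃ b ∈ S,
      (∀ y ∈ S, ⟪y, nv c⟫ ≤ ⟪a, nv c⟫) ∧ (∀ y ∈ S, ⟪y, nv c⟫ ≤ ⟪b, nv c⟫) ∧
      ⟪a, nv c⟫ = ⟪b, nv c⟫ ∧ ⟪a, tv c⟫ ≤ ⟪b, tv c⟫ ∧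
      (∀ᶠ θ in 𝓝[<] c, ∀ y ∈ S, ⟪y, nv θ⟫ ≤ ⟪a, nv θ⟫) ∧
      (∀ᶠ θ in 𝓝[>] c, ∀ y ∈ S, ⟪y, nv θ⟫ ≤ ⟪b, nv θ⟫) ∧
      face (convexHull ℝ (S : Set E2)) (nv c) = segment ℝ a b := by
  classical
  set M := S.filter (fun x => ∀ y ∈ S, ⟪y, nv c⟫ ≤ ⟪x, nv c⟫) with hMdef
  obtain ⟨x₀, hx₀S, hx₀max⟩ := S.exists_max_image (fun y => ⟪y, nv c⟫) hS
  have hx₀M : x₀ ∈ M := Finset.mem_filter.2 ⟨hx₀S, hx₀max⟩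
  have hMne : M.Nonempty := ⟨x₀, hx₀M⟩
  obtain ⟨a, haM, hamin⟩ := M.exists_min_image (fun y => ⟪y, tv c⟫) hMne
  obtain ⟨b, hbM, hbmax⟩ := M.exists_max_image (fun y => ⟪y, tv c⟫) hMne
  have haS : a ∈ S := (Finset.mem_filter.1 haM).1
  have hbS : b ∈ S := (Finset.mem_filter.1 hbM).1
  have hamax : ∀ y ∈ S, ⟪y, nv c⟫ ≤ ⟪a, nv c⟫ := (Finset.mem_filter.1 haM).2
  have hbmax' : ∀ y ∈ S, ⟪y, nv c⟫ ≤ ⟪b, nv c⟫ := (Finset.mem_filter.1 hbM).2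
  have hab_nv : ⟪a, nv c⟫ = ⟪b, nv c⟫ := le_antisymm (hbmax' a haS) (hamax b hbS)
  have hab_tv : ⟪a, tv c⟫ ≤ ⟪b, tv c⟫ := hamin b hbM
  have hMn : ∀ x ∈ M, ⟪x, nv c⟫ = ⟪a, nv c⟫ := fun x hx =>
    le_antisymm (hamax x (Finset.mem_filter.1 hx).1) ((Finset.mem_filter.1 hx).2 a haS)
  have hnotM : ∀ y ∈ S, y ∉ M → ⟪y, nv c⟫ < ⟪a, nv c⟫ := by
    intro y hyS hyM
    have hy' : ¬ ∀ z ∈ S, ⟪z, nv c⟫ ≤ ⟪y, nv c⟫ := fun hcon =>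
      hyM (Finset.mem_filter.2 ⟨hyS, hcon⟩)
    push_neg at hy'
    obtain ⟨z, hzS, hz⟩ := hy'
    exact lt_of_lt_of_le hz (hamax z hzS)
  have hleft : ∀ᶠ θ in 𝓝[<] c, ∀ y ∈ S, ⟪y, nv θ⟫ ≤ ⟪a, nv θ⟫ := by
    rw [Filter.eventually_all_finset]
    intro y hyS
    by_cases hyM : y ∈ M
    · by_cases hyt : ⟪y, tv c⟫ = ⟪a, tv c⟫
      · have : y = a := eq_of_inner_nv_tv c (hMn y hyM) hyt
        subst this
        exact Filter.Eventually.of_forall fun θ => le_rfl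
      · have hlt : ⟪a, tv c⟫ < ⟪y, tv c⟫ := lt_of_le_of_ne (hamin y hyM) (Ne.symm hyt)
        have hd : HasDerivAt (fun θ => ⟪a, nv θ⟫ - ⟪y, nv θ⟫)
            (⟪a, tv c⟫ - ⟪y, tv c⟫) c := (hasDerivAt_inner_nv a c).sub (hasDerivAt_inner_nv y c)
        have h0 : ⟪a, nv c⟫ - ⟪y, nv c⟫ = 0 := by rw [hMn y hyM]; ring
        exact (eventually_pos_left (f := fun θ => ⟪a, nv θ⟫ - ⟪y, nv θ⟫) h0 hd (by linarith)).mono fun θ hθ => by linarith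
    · have hlt0 : ⟪y, nv c⟫ < ⟪a, nv c⟫ := hnotM y hyS hyM
      have hcont : Continuous fun θ => ⟪a, nv θ⟫ - ⟪y, nv θ⟫ :=
        (continuous_inner_nv a).sub (continuous_inner_nv y)
      have hev : ∀ᶠ θ in 𝓝 c, 0 < ⟪a, nv θ⟫ - ⟪y, nv θ⟫ :=
        (hcont.tendsto c).eventually (eventually_gt_nhds (by linarith))
      exact ((hev.filter_mono nhdsWithin_le_nhds).mono fun θ hθ => by linarith)
  have hright : ∀ᶠ θ in 𝓝[>] c, ∀ y ∈ S, ⟪y, nv θ⟫ ≤ ⟪b, nv θ⟫ := by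
    rw [Filter.eventually_all_finset]
    intro y hyS
    by_cases hyM : y ∈ M
    · by_cases hyt : ⟪y, tv c⟫ = ⟪b, tv c⟫
      · have hyn : ⟪y, nv c⟫ = ⟪b, nv c⟫ := by rw [hMn y hyM, hab_nv]
        have : y = b := eq_of_inner_nv_tv c hyn hyt
        subst this
        exact Filter.Eventually.of_forall fun θ => le_rfl
      · have hlt : ⟪y, tv c⟫ < ⟪b, tv c⟫ := lt_of_le_of_ne (hbmax y hyM) hyt
        have hd : HasDerivAt (fun θ => ⟪b, nv θ⟫ - ⟪y, nv θ⟫)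
            (⟪b, tv c⟫ - ⟪y, tv c⟫) c := (hasDerivAt_inner_nv b c).sub (hasDerivAt_inner_nv y c)
        have h0 : ⟪b, nv c⟫ - ⟪y, nv c⟫ = 0 := by rw [hMn y hyM, hab_nv]; ring
        exact (eventually_pos_right (f := fun θ => ⟪b, nv θ⟫ - ⟪y, nv θ⟫) h0 hd (by linarith)).mono fun θ hθ => by linarith
    · have hlt0 : ⟪y, nv c⟫ < ⟪b, nv c⟫ := by
        rw [← hab_nv]; exact hnotM y hyS hyM
      have hcont : Continuous fun θ => ⟪b, nv θ⟫ - ⟪y, nv θ⟫ :=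
        (continuous_inner_nv b).sub (continuous_inner_nv y)
      have hev : ∀ᶠ θ in 𝓝 c, 0 < ⟪b, nv θ⟫ - ⟪y, nv θ⟫ :=
        (hcont.tendsto c).eventually (eventually_gt_nhds (by linarith))
      exact ((hev.filter_mono nhdsWithin_le_nhds).mono fun θ hθ => by linarith)
  refine ⟨a, haS, b, hbS, hamax, hbmax', hab_nv, hab_tv, hleft, hright, ?_⟩
  rw [face_convexHull_eq S hS (nv c)]
  apply Set.Subset.antisymm
  · apply convexHull_min _ (convex_segment a b)
    intro x hx
    have hxM : x ∈ M := by exact_mod_cast hx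
    have hxn : ⟪x, nv c⟫ = ⟪a, nv c⟫ := hMn x hxM
    have hxta : ⟪a, tv c⟫ ≤ ⟪x, tv c⟫ := hamin x hxM
    have hxtb : ⟪x, tv c⟫ ≤ ⟪b, tv c⟫ := hbmax x hxM
    by_cases h0 : ⟪a, tv c⟫ = ⟪b, tv c⟫
    · have hxa : x = a := eq_of_inner_nv_tv c hxn (le_antisymm (by linarith) hxta)
      rw [hxa]
      exact left_mem_segment ℝ a b
    · have hlt : ⟪a, tv c⟫ < ⟪b, tv c⟫ := lt_of_le_of_ne hab_tv h0
      rw [segment_eq_image']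
      refine ⟨(⟪x, tv c⟫ - ⟪a, tv c⟫) / (⟪b, tv c⟫ - ⟪a, tv c⟫),
        ⟨div_nonneg (by linarith) (by linarith), (div_le_one (by linarith)).2 (by linarith)⟩, ?_⟩
      set t := (⟪x, tv c⟫ - ⟪a, tv c⟫) / (⟪b, tv c⟫ - ⟪a, tv c⟫) with ht
      apply eq_of_inner_nv_tv c
      · rw [inner_add_left, real_inner_smul_left, inner_sub_left, hxn]
        rw [← hab_nv]
        ring
      · rw [inner_add_left, real_inner_smul_left, inner_sub_left]
        have hne : ⟪b, tv c⟫ - ⟪a, tv c⟫ ≠ 0 := ne_of_gt (by linarith)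
        rw [ht, div_mul_cancel₀ _ hne]
        ring
  · rw [← convexHull_pair]
    apply convexHull_mono
    intro z hz
    rcases hz with hz | hz
    · rw [hz]; exact_mod_cast haM
    · rw [Set.mem_singleton_iff.1 hz]; exact_mod_cast hbM

lemma inner_tv_nv (c : ℝ) : ⟪tv c, nv c⟫ = 0 := by
  simp [nv, tv, PiLp.inner_apply, Fin.sum_univ_two, RCLike.inner_apply]
  ring

lemma inner_tv_tv (c : ℝ) : ⟪tv c, tv c⟫ = 1 := by
  have h := Real.cos_sq_add_sin_sq c
  simp [tv, PiLp.inner_apply, Fin.sum_univ_two, RCLike.inner_apply]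
  left; exact norm_tv c

lemma hm_face_seg (a b : E2) (c : ℝ) (h1 : ⟪a, nv c⟫ = ⟪b, nv c⟫)
    (h2 : ⟪a, tv c⟫ ≤ ⟪b, tv c⟫) :
    μH[(1:ℝ)] (segment ℝ a b) = ENNReal.ofReal (⟪b, tv c⟫ - ⟪a, tv c⟫) := by
  rw [hm_segment]
  congr 1
  have hba : b - a = (⟪b, tv c⟫ - ⟪a, tv c⟫) • tv c := by
    apply eq_of_inner_nv_tv c
    · rw [inner_sub_left, real_inner_smul_left, inner_tv_nv, h1]
      ring
    · rw [inner_sub_left, real_inner_smul_left, inner_tv_tv]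
      ring
  rw [hba, norm_smul, norm_tv, mul_one, Real.norm_eq_abs, abs_of_nonneg (by linarith)]

lemma sup'_eq_of_max (S : Finset E2) (hS : S.Nonempty) (f : E2 → ℝ) {x : E2}
    (hx : x ∈ S) (hmax : ∀ y ∈ S, f y ≤ f x) : S.sup' hS f = f x :=
  le_antisymm (Finset.sup'_le _ _ hmax) (Finset.le_sup' _ hx)

lemma local_rep (S₁ S₂ : Finset E2) (hS₁ : S₁.Nonempty) (hS₂ : S₂.Nonempty)
    (h : ∀ n : E2, ‖n‖ = 1 →
      μH[(1 : ℝ)] (face (convexHull ℝ (S₁ : Set E2)) n)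
        = μH[(1 : ℝ)] (face (convexHull ℝ (S₂ : Set E2)) n)) (c : ℝ) :
    ∃ ε > 0, ∃ w : E2, ∀ θ ∈ Metric.ball c ε,
      S₁.sup' hS₁ (fun x => ⟪x, nv θ⟫) - S₂.sup' hS₂ (fun x => ⟪x, nv θ⟫) = ⟪w, nv θ⟫ := by
  obtain ⟨a₁, ha₁S, b₁, hb₁S, ha₁max, hb₁max, hab₁nv, hab₁tv, hl₁, hr₁, hface₁⟩ :=
    exists_local S₁ hS₁ c
  obtain ⟨a₂, ha₂S, b₂, hb₂S, ha₂max, hb₂max, hab₂nv, hab₂tv, hl₂, hr₂, hface₂⟩ :=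
    exists_local S₂ hS₂ c
  have hmeas := h (nv c) (norm_nv c)
  rw [hface₁, hface₂, hm_face_seg a₁ b₁ c hab₁nv hab₁tv, hm_face_seg a₂ b₂ c hab₂nv hab₂tv] at hmeas
  have hL : ⟪b₁, tv c⟫ - ⟪a₁, tv c⟫ = ⟪b₂, tv c⟫ - ⟪a₂, tv c⟫ :=
    (ENNReal.ofReal_eq_ofReal_iff (by linarith) (by linarith)).1 hmeas
  have hbw : b₁ - b₂ = a₁ - a₂ := by
    apply eq_of_inner_nv_tv c
    · rw [inner_sub_left, inner_sub_left, ← hab₁nv, ← hab₂nv]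
    · rw [inner_sub_left, inner_sub_left]
      linarith
  obtain ⟨l, hl, hsubl⟩ := mem_nhdsLT_iff_exists_Ioo_subset.1 (hl₁.and hl₂)
  obtain ⟨r, hr, hsubr⟩ := mem_nhdsGT_iff_exists_Ioo_subset.1 (hr₁.and hr₂)
  have hlc : l < c := hl
  have hcr : c < r := hr
  refine ⟨min (c - l) (r - c), lt_min (by linarith) (by linarith), a₁ - a₂, ?_⟩
  intro θ hθ
  rw [Metric.mem_ball, Real.dist_eq] at hθ
  have hθ1 : l < θ := by
    have := abs_lt.1 (lt_of_lt_of_le hθ (min_le_left _ _))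
    linarith [this.1]
  have hθ2 : θ < r := by
    have := abs_lt.1 (lt_of_lt_of_le hθ (min_le_right _ _))
    linarith [this.2]
  rcases lt_trichotomy θ c with hc | hc | hc
  · obtain ⟨hm₁, hm₂⟩ := hsubl ⟨hθ1, hc⟩
    rw [sup'_eq_of_max S₁ hS₁ _ ha₁S hm₁, sup'_eq_of_max S₂ hS₂ _ ha₂S hm₂, inner_sub_left]
  · subst hc
    rw [sup'_eq_of_max S₁ hS₁ _ ha₁S ha₁max, sup'_eq_of_max S₂ hS₂ _ ha₂S ha₂max, inner_sub_left]
  · obtain ⟨hm₁, hm₂⟩ := hsubr ⟨hc, hθ2⟩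
    rw [sup'_eq_of_max S₁ hS₁ _ hb₁S hm₁, sup'_eq_of_max S₂ hS₂ _ hb₂S hm₂, ← inner_sub_left, hbw,
      inner_sub_left]

lemma global_rep {G : ℝ → ℝ}
    (hloc : ∀ c : ℝ, ∃ ε > 0, ∃ w : E2, ∀ θ ∈ Metric.ball c ε, G θ = ⟪w, nv θ⟫) :
    ∃ w : E2, ∀ θ : ℝ, G θ = ⟪w, nv θ⟫ := by
  obtain ⟨ε₀, hε₀, w₀, hw₀⟩ := hloc 0
  refine ⟨w₀, ?_⟩
  set B : Set ℝ := {c | ∃ ε > 0, ∀ θ ∈ Metric.ball c ε, G θ = ⟪w₀, nv θ⟫} with hB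
  have hopen : IsOpen B := by
    rw [Metric.isOpen_iff]
    rintro c ⟨ε, hε, hw⟩
    refine ⟨ε / 2, by linarith, ?_⟩
    intro c' hc'
    refine ⟨ε / 2, by linarith, ?_⟩
    intro θ hθ
    apply hw
    rw [Metric.mem_ball] at *
    calc dist θ c ≤ dist θ c' + dist c' c := dist_triangle _ _ _
      _ < ε / 2 + ε / 2 := by exact add_lt_add hθ hc'
      _ = ε := by ring
  have hclosed : IsClosed B := by
    apply isClosed_of_closure_subset
    intro c hc
    obtain ⟨ε, hε, w, hwloc⟩ := hloc c
    obtain ⟨c', hc'B, hdist⟩ := Metric.mem_closure_iff.1 hc (ε / 2) (by linarith)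
    obtain ⟨ε', hε', hw'⟩ := hc'B
    have hδ : 0 < min ε' (ε - dist c c') := lt_min hε' (by linarith)
    have hww : w = w₀ := by
      apply vec_eq_of_inner_nv_ball (c := c') hδ
      intro θ hθ
      rw [Metric.mem_ball] at hθ
      have h1 : θ ∈ Metric.ball c ε := by
        rw [Metric.mem_ball]
        calc dist θ c ≤ dist θ c' + dist c' c := dist_triangle _ _ _
          _ < min ε' (ε - dist c c') + dist c' c := by
              exact add_lt_add_of_lt_of_le hθ le_rfl
          _ ≤ (ε - dist c c') + dist c' c := by
              have := min_le_right ε' (ε - dist c c')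
              linarith
          _ = ε := by rw [dist_comm]; ring
      have h2 : θ ∈ Metric.ball c' ε' := by
        rw [Metric.mem_ball]
        exact lt_of_lt_of_le hθ (min_le_left _ _)
      rw [← hwloc θ h1, hw' θ h2]
    refine ⟨ε, hε, fun θ hθ => ?_⟩
    rw [hwloc θ hθ, hww]
  have hBuniv : B = Set.univ := IsClopen.eq_univ ⟨hclosed, hopen⟩ ⟨0, ε₀, hε₀, hw₀⟩
  intro θ
  have hθB : θ ∈ B := hBuniv ▸ Set.mem_univ θ
  obtain ⟨ε, hε, hw⟩ := hθB
  exact hw θ (Metric.mem_ball_self hε)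

lemma exists_theta {n : E2} (hn : ‖n‖ = 1) : ∃ θ : ℝ, nv θ = n := by
  have hsq : n 0 ^ 2 + n 1 ^ 2 = 1 := by
    have := hn
    rw [EuclideanSpace.norm_eq] at this
    have h2 : Real.sqrt (∑ i : Fin 2, ‖n i‖ ^ 2) = 1 := this
    rw [Fin.sum_univ_two] at h2
    have h3 : ‖n 0‖ ^ 2 + ‖n 1‖ ^ 2 = 1 := by
      have h4 : (0:ℝ) ≤ ‖n 0‖ ^ 2 + ‖n 1‖ ^ 2 := by positivity
      nlinarith [Real.sq_sqrt h4, h2]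
    simpa [sq_abs] using h3
  set z : ℂ := ⟨n 0, n 1⟩ with hz
  have hz0 : z ≠ 0 := by
    intro h0
    have : n 0 = 0 ∧ n 1 = 0 := by
      constructor
      · exact congrArg Complex.re h0
      · exact congrArg Complex.im h0
    nlinarith [this.1, this.2]
  have habs : ‖z‖ = 1 := by
    rw [Complex.norm_def, Complex.normSq_apply]
    simp only [hz]
    rw [show n 0 * n 0 + n 1 * n 1 = 1 by nlinarith]
    exact Real.sqrt_one
  refine ⟨Complex.arg z, ?_⟩
  have hcos : Real.cos (Complex.arg z) = n 0 := by
    rw [Complex.cos_arg hz0, habs]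
    simp [hz]
  have hsin : Real.sin (Complex.arg z) = n 1 := by
    rw [Complex.sin_arg, habs]
    simp [hz]
  ext i
  fin_cases i
  · simpa [nv] using hcos
  · simpa [nv] using hsin

lemma conv_subset_of_support (A B : Finset E2) (hA : A.Nonempty) (hB : B.Nonempty)
    (h : ∀ m : E2, ‖m‖ = 1 →
      A.sup' hA (fun y => ⟪y, m⟫) ≤ B.sup' hB (fun y => ⟪y, m⟫)) :
    convexHull ℝ (A : Set E2) ⊆ convexHull ℝ (B : Set E2) := by
  intro x hx
  by_contra hxB
  obtain ⟨f, u, hfb, hfx⟩ := geometric_hahn_banach_closed_point (convex_convexHull ℝ _)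
    ((B : Set E2).toFinite.isCompact_convexHull ℝ |>.isClosed) hxB
  set z := (InnerProductSpace.toDual ℝ E2).symm f with hzdef
  have hzapp : ∀ y : E2, ⟪z, y⟫ = f y := fun y => InnerProductSpace.toDual_symm_apply
  have hz0 : z ≠ 0 := by
    intro h0
    obtain ⟨b0, hb0⟩ := hB
    have h1 := hfb b0 (subset_convexHull ℝ _ hb0)
    have h2 : f b0 = 0 := by rw [← hzapp, h0, inner_zero_left]
    have h3 : f x = 0 := by rw [← hzapp, h0, inner_zero_left]
    linarith
  set m := ‖z‖⁻¹ • z with hmdef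
  have hm : ‖m‖ = 1 := norm_smul_inv_norm (𝕜 := ℝ) hz0
  have hzpos : (0:ℝ) < ‖z‖⁻¹ := by
    have : (0:ℝ) < ‖z‖ := norm_pos_iff.2 hz0
    positivity
  have hinner : ∀ y : E2, ⟪y, m⟫ = ‖z‖⁻¹ * f y := by
    intro y
    rw [real_inner_comm, hmdef, real_inner_smul_left, hzapp]
  have hBlt : B.sup' hB (fun y => ⟪y, m⟫) < ‖z‖⁻¹ * u := by
    rw [Finset.sup'_lt_iff]
    intro y hy
    rw [hinner y]
    exact mul_lt_mul_of_pos_left (hfb y (subset_convexHull ℝ _ hy)) hzpos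
  have hxm : ‖z‖⁻¹ * u < ⟪x, m⟫ := by
    rw [hinner x]
    exact mul_lt_mul_of_pos_left hfx hzpos
  have hxle : ⟪x, m⟫ ≤ A.sup' hA (fun y => ⟪y, m⟫) := sup'_support A hA m hx
  linarith [h m hm]

lemma sup'_add_const (S : Finset E2) (hS : S.Nonempty) (g : E2 → ℝ) (d : ℝ) :
    S.sup' hS (fun x => g x + d) = S.sup' hS g + d := by
  apply le_antisymm
  · apply Finset.sup'_le
    intro x hx
    have : g x ≤ S.sup' hS g := Finset.le_sup' g hx
    linarith
  · have : S.sup' hS g ≤ S.sup' hS (fun x => g x + d) - d := by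
      apply Finset.sup'_le
      intro x hx
      have : g x + d ≤ S.sup' hS (fun x => g x + d) := Finset.le_sup' (fun x => g x + d) hx
      linarith
    linarith


/-- **Minkowski uniqueness in the plane.** If for every unit vector `n` the faces of two
convex polygons with outward normal `n` have the same length, the polygons are translates. -/
theorem minkowski_uniqueness_dim2
    (P₁ P₂ : Set (EuclideanSpace ℝ (Fin 2)))
    (h₁ : IsConvexPolytope P₁) (h₂ : IsConvexPolytope P₂)
    (h : ∀ n : EuclideanSpace ℝ (Fin 2), ‖n‖ = 1 →
      μH[(1 : ℝ)] (face P₁ n) = μH[(1 : ℝ)] (face P₂ n)) :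
    IsTranslate P₁ P₂ := by
  classical
  obtain ⟨⟨S₁, hP₁⟩, hint₁⟩ := h₁
  obtain ⟨⟨S₂, hP₂⟩, hint₂⟩ := h₂
  obtain ⟨x₁, hx₁⟩ := hint₁
  obtain ⟨x₂, hx₂⟩ := hint₂
  have hS₁ : S₁.Nonempty := by
    have : ((S₁ : Set E2)).Nonempty :=
      convexHull_nonempty_iff.1 ⟨x₁, hP₁ ▸ interior_subset hx₁⟩
    exact_mod_cast this
  have hS₂ : S₂.Nonempty := by
    have : ((S₂ : Set E2)).Nonempty :=
      convexHull_nonempty_iff.1 ⟨x₂, hP₂ ▸ interior_subset hx₂⟩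
    exact_mod_cast this
  have h' : ∀ n : E2, ‖n‖ = 1 →
      μH[(1 : ℝ)] (face (convexHull ℝ (S₁ : Set E2)) n)
        = μH[(1 : ℝ)] (face (convexHull ℝ (S₂ : Set E2)) n) := by
    intro n hn
    rw [← hP₁, ← hP₂]
    exact h n hn
  obtain ⟨w, hw⟩ := global_rep (local_rep S₁ S₂ hS₁ hS₂ h')
  refine ⟨-w, ?_⟩
  set T : Finset E2 := S₁.image (fun x => -w + x) with hT
  have hTne : T.Nonempty := hS₁.image _
  have himg : (fun x => -w + x) '' P₁ = convexHull ℝ (T : Set E2) := by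
    have key := (AffineEquiv.constVAdd ℝ E2 (-w)).toAffineMap.image_convexHull (S₁ : Set E2)
    have hcoe : ⇑((AffineEquiv.constVAdd ℝ E2 (-w)).toAffineMap) = (fun x : E2 => -w + x) := rfl
    rw [hcoe] at key
    rw [hP₁, hT, Finset.coe_image]
    exact key
  have hsupT : ∀ m : E2, ‖m‖ = 1 →
      T.sup' hTne (fun y => ⟪y, m⟫) = S₂.sup' hS₂ (fun y => ⟪y, m⟫) := by
    intro m hm
    obtain ⟨θ, rfl⟩ := exists_theta hm
    have e1 : T.sup' hTne (fun y => ⟪y, nv θ⟫)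
        = S₁.sup' hTne.of_image ((fun y => ⟪y, nv θ⟫) ∘ (fun x => -w + x)) :=
      Finset.sup'_image hTne _
    have e2 : S₁.sup' hTne.of_image ((fun y => ⟪y, nv θ⟫) ∘ (fun x => -w + x))
        = S₁.sup' hTne.of_image (fun x => ⟪x, nv θ⟫ + ⟪-w, nv θ⟫) := by
      apply Finset.sup'_congr _ rfl
      intro x hx
      simp only [Function.comp]
      rw [inner_add_left]
      ring
    have e3 : S₁.sup' hTne.of_image (fun x => ⟪x, nv θ⟫ + ⟪-w, nv θ⟫)
        = S₁.sup' hTne.of_image (fun x => ⟪x, nv θ⟫) + ⟪-w, nv θ⟫ :=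
      sup'_add_const S₁ _ _ _
    have e4 : S₁.sup' hTne.of_image (fun x => ⟪x, nv θ⟫)
        = S₁.sup' hS₁ (fun x => ⟪x, nv θ⟫) := rfl
    have hwθ := hw θ
    rw [e1, e2, e3, e4, inner_neg_left]
    linarith
  have hconv : convexHull ℝ (T : Set E2) = convexHull ℝ (S₂ : Set E2) :=
    Set.Subset.antisymm
      (conv_subset_of_support T S₂ hTne hS₂ (fun m hm => (hsupT m hm).le))
      (conv_subset_of_support S₂ T hS₂ hTne (fun m hm => (hsupT m hm).ge))
  rw [himg, hconv, hP₂]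
end
end
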